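/- arXiv:1907.00697 — 4 statements merged into one kernel-verified Lean document; each statement's English description precedes it below -/
import Mathlib

section
/- Let B be an m×n random binary matrix with i.i.d. Bernoulli(p) entries, δ ∈ [p,1], 1 ≤ a ≤ n, 1 ≤ b ≤ m. The probability that there exist binary vectors x, y with |x| ≥ a, |y| ≥ b and yᵀBx ≥ δ|x||y| is at most C(n,a)·C(m,b)·exp(−2ab(δ−p)²). -/
/-!
If a dense tile with supports of sizes at least `a` and `b` exists, then repeatedly deleting a
column (then a row) of least weight never lowers the density, so some tile with supports of sizes
exactly `a` and `b` is `δ`-dense as well. For a fixed such tile the number of ones is a sum of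
`ab` independent Bernoulli(`p`) variables, and Hoeffding's inequality bounds the probability that
it reaches `δab` by `exp (-2ab(δ - p)²)`. A union bound over the `C(n,a) C(m,b)` pairs of supports
concludes.
-/

open MeasureTheory ProbabilityTheory Finset Real

theorem exists_subset_card_eq_mul_le_sum {ι : Type*} (g : ι → ℝ) (c : ℝ) {a : ℕ}
    {X : Finset ι} (haX : a ≤ #X) (hX : c * #X ≤ ∑ i ∈ X, g i) :
    ∃ S ⊆ X, #S = a ∧ c * a ≤ ∑ i ∈ S, g i := by
  classical
  induction X using Finset.strongInduction with
  | H X ih =>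
  rcases haX.eq_or_lt with rfl | hlt
  · exact ⟨X, subset_rfl, rfl, hX⟩
  obtain ⟨i, hi, hmin⟩ := X.exists_min_image g (card_pos.1 (by omega))
  -- the least value is at most the average, so removing it keeps the average at least `c`
  have hbelow : #X * g i ≤ ∑ j ∈ X, g j := by
    simpa using card_nsmul_le_sum X g (g i) hmin
  have hcard : (#(X.erase i) : ℝ) = #X - 1 := by
    rw [card_erase_of_mem hi, Nat.cast_sub (by omega), Nat.cast_one]
  have herase : c * #(X.erase i) ≤ ∑ j ∈ X.erase i, g j := by
    rw [hcard, sum_erase_eq_sub hi]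
    have hpos : (0 : ℝ) < #X := by exact_mod_cast (by omega : 0 < #X)
    nlinarith
  obtain ⟨S, hS, hSa, hSsum⟩ :=
    ih _ (erase_ssubset hi) (by rw [card_erase_of_mem hi]; omega) herase
  exact ⟨S, hS.trans (erase_subset i X), hSa, hSsum⟩

theorem exists_subtile_card_eq {ι κ : Type*} (M : κ → ι → ℝ) (δ : ℝ) {a b : ℕ}
    {X : Finset ι} {Y : Finset κ} (ha : a ≤ #X) (hb : b ≤ #Y)
    (hdense : δ * #X * #Y ≤ ∑ j ∈ Y, ∑ i ∈ X, M j i) :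
    ∃ S ⊆ X, ∃ T ⊆ Y, #S = a ∧ #T = b ∧ δ * a * b ≤ ∑ j ∈ T, ∑ i ∈ S, M j i := by
  obtain ⟨S, hSX, hSa, hS⟩ := exists_subset_card_eq_mul_le_sum (fun i => ∑ j ∈ Y, M j i)
    (δ * #Y) ha (by rw [sum_comm]; linarith)
  obtain ⟨T, hTY, hTb, hT⟩ := exists_subset_card_eq_mul_le_sum (fun j => ∑ i ∈ S, M j i)
    (δ * a) hb (by rw [sum_comm]; linarith)
  exact ⟨S, hSX, T, hTY, hSa, hTb, hT⟩

theorem sum_boole_mul_mul_boole_eq_sum_filter {ι κ : Type*} [Fintype ι] [Fintype κ]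
    (x : ι → Bool) (y : κ → Bool) (M : κ → ι → ℝ) :
    ∑ j, ∑ i, (if y j then (1 : ℝ) else 0) * M j i * (if x i then 1 else 0) =
      ∑ j ∈ univ.filter (y · = true), ∑ i ∈ univ.filter (x · = true), M j i := by
  rw [sum_filter]
  refine sum_congr rfl fun j _ => ?_
  cases y j <;> simp [sum_filter]

noncomputable abbrev boolBernoulli (p : ℝ) (hp1 : p ≤ 1) : Measure Bool :=
  (PMF.bernoulli p.toNNReal (Real.toNNReal_le_one.mpr hp1)).toMeasure

theorem integral_boolBernoulli {p : ℝ} (hp0 : 0 ≤ p) (hp1 : p ≤ 1) (f : Bool → ℝ) :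
    ∫ b, f b ∂boolBernoulli p hp1 = p * f true + (1 - p) * f false := by
  rw [PMF.integral_eq_sum, Fintype.sum_bool]
  simp [PMF.bernoulli_apply, hp0, hp1]

theorem hasSubgaussianMGF_boolBernoulli {p : ℝ} (hp0 : 0 ≤ p) (hp1 : p ≤ 1) :
    HasSubgaussianMGF (fun b : Bool => (if b then 1 else 0) - p) (1 / 4)
      (boolBernoulli p hp1) := by
  have h := hasSubgaussianMGF_of_mem_Icc_of_integral_eq_zero (μ := boolBernoulli p hp1)
    (X := fun b : Bool => (if b then 1 else 0) - p) (a := -p) (b := 1 - p) (by fun_prop)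
    (ae_of_all _ fun b => by cases b <;> simp)
    (by rw [integral_boolBernoulli hp0 hp1]; simp; ring)
  norm_num at h
  exact h

theorem pi_boolBernoulli_mul_card_le_sum_le {ι : Type*} [Fintype ι] {p δ : ℝ} (hp0 : 0 ≤ p)
    (hp1 : p ≤ 1) (hδp : p ≤ δ) (K : Finset ι) :
    Measure.pi (fun _ : ι => boolBernoulli p hp1)
        {ω | δ * #K ≤ ∑ c ∈ K, if ω c then (1 : ℝ) else 0} ≤
      ENNReal.ofReal (exp (-2 * #K * (δ - p) ^ 2)) := by
  set μ := Measure.pi fun _ : ι => boolBernoulli p hp1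
  have hindep : iIndepFun (fun c (ω : ι → Bool) => (if ω c then (1 : ℝ) else 0) - p) μ :=
    iIndepFun_pi (X := fun _ (b : Bool) => (if b then (1 : ℝ) else 0) - p) fun _ => by fun_prop
  have hsubG (c : ι) :
      HasSubgaussianMGF (fun ω : ι → Bool => (if ω c then (1 : ℝ) else 0) - p) (1 / 4) μ := by
    have h := hasSubgaussianMGF_boolBernoulli hp0 hp1
    rw [← (measurePreserving_eval (fun _ : ι => boolBernoulli p hp1) c).map_eq] at h
    exact h.of_map ((measurable_pi_apply c).aemeasurable : AEMeasurable (Function.eval c) μ)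
  have hoeffding := HasSubgaussianMGF.measure_sum_ge_le_of_iIndepFun hindep (s := K)
    (fun c _ => hsubG c) (mul_nonneg (sub_nonneg.2 hδp) (#K).cast_nonneg)
  have hevent : {ω : ι → Bool | δ * #K ≤ ∑ c ∈ K, if ω c then (1 : ℝ) else 0} =
      {ω | (δ - p) * #K ≤ ∑ c ∈ K, ((if ω c then (1 : ℝ) else 0) - p)} := by
    ext ω
    simp only [Set.mem_ofPred_eq, sum_sub_distrib, sum_const, nsmul_eq_mul]
    constructor <;> intro h <;> linarith
  rw [hevent, ← ofReal_measureReal]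
  refine ENNReal.ofReal_le_ofReal (hoeffding.trans_eq ?_)
  -- for `K = ∅` Hoeffding's exponent is the junk value `-0 / 0 = 0`
  rcases (#K).eq_zero_or_pos with hK | hK
  · simp [hK]
  · congr 1
    simp only [sum_const, nsmul_eq_mul]
    field_simp
    push_cast
    ring

theorem dense_tile_existence_bound_general (m n : ℕ) (p : ℝ) (hp0 : 0 ≤ p) (hp1 : p ≤ 1)
    (μ : Measure ((Fin m × Fin n) → Bool))
    (hμ : μ = Measure.pi fun _ =>
      (PMF.bernoulli (Real.toNNReal p) (Real.toNNReal_le_one.mpr hp1)).toMeasure)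
    (δ : ℝ) (hδp : p ≤ δ)
    (a b : ℕ) :
    μ {ω | ∃ (x : Fin n → Bool) (y : Fin m → Bool),
        a ≤ (Finset.univ.filter fun i => x i = true).card ∧
        b ≤ (Finset.univ.filter fun j => y j = true).card ∧
        δ * (Finset.univ.filter fun i => x i = true).card *
            (Finset.univ.filter fun j => y j = true).card ≤
          ∑ j, ∑ i, (if y j then (1 : ℝ) else 0) *
            (if ω (j, i) then 1 else 0) * (if x i then 1 else 0)} ≤
      ENNReal.ofReal ((n.choose a : ℝ) * (m.choose b : ℝ) *
        Real.exp (-2 * a * b * (δ - p) ^ 2)) := by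
  subst hμ
  let tiles := powersetCard a (univ : Finset (Fin n)) ×ˢ powersetCard b (univ : Finset (Fin m))
  let denseOn (st : Finset (Fin n) × Finset (Fin m)) : Set ((Fin m × Fin n) → Bool) :=
    {ω | δ * #(st.2 ×ˢ st.1) ≤ ∑ c ∈ st.2 ×ˢ st.1, if ω c then (1 : ℝ) else 0}
  refine (measure_mono (t := ⋃ st ∈ tiles, denseOn st) ?_).trans <|
    (measure_biUnion_finset_le _ _).trans ?_
  · rintro ω ⟨x, y, hx, hy, hdense⟩
    rw [sum_boole_mul_mul_boole_eq_sum_filter] at hdense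
    obtain ⟨S, -, T, -, rfl, rfl, hST⟩ := exists_subtile_card_eq _ δ hx hy hdense
    refine Set.mem_biUnion (x := (S, T)) (by simp [tiles]) ?_
    simp only [denseOn, Set.mem_ofPred_eq, card_product, sum_product, Nat.cast_mul]
    linarith
  · calc ∑ st ∈ tiles, _
        ≤ ∑ _st ∈ tiles, ENNReal.ofReal (exp (-2 * a * b * (δ - p) ^ 2)) := by
          refine sum_le_sum fun st hst => ?_
          obtain ⟨hS, hT⟩ := mem_product.1 hst
          refine (pi_boolBernoulli_mul_card_le_sum_le hp0 hp1 hδp _).trans_eq ?_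
          rw [card_product, (mem_powersetCard.1 hS).2, (mem_powersetCard.1 hT).2]
          congr 3
          push_cast
          ring
      _ = _ := by
          rw [sum_const, nsmul_eq_mul, ENNReal.ofReal_mul (by positivity),
            ← ENNReal.ofReal_natCast]
          simp [tiles, card_powersetCard]

/-- Theorem 3.1: the probability that a δ-dense tile of size at least `(a, b)`
exists in an `m × n` Bernoulli matrix with parameter `p` is at most
`C(n,a) C(m,b) exp(-2ab(δ-p)²)`. -/
theorem dense_tile_existence_bound (m n : ℕ) (p : ℝ) (hp0 : 0 ≤ p) (hp1 : p ≤ 1)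
    (μ : Measure ((Fin m × Fin n) → Bool))
    (hμ : μ = Measure.pi fun _ =>
      (PMF.bernoulli (Real.toNNReal p) (Real.toNNReal_le_one.mpr hp1)).toMeasure)
    (δ : ℝ) (hδp : p ≤ δ) (hδ1 : δ ≤ 1)
    (a b : ℕ) (ha : 1 ≤ a) (han : a ≤ n) (hb : 1 ≤ b) (hbm : b ≤ m) :
    μ {ω | ∃ (x : Fin n → Bool) (y : Fin m → Bool),
        a ≤ (Finset.univ.filter fun i => x i = true).card ∧
        b ≤ (Finset.univ.filter fun j => y j = true).card ∧
        δ * (Finset.univ.filter fun i => x i = true).card *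
            (Finset.univ.filter fun j => y j = true).card ≤
          ∑ j, ∑ i, (if y j then (1 : ℝ) else 0) *
            (if ω (j, i) then 1 else 0) * (if x i then 1 else 0)} ≤
      ENNReal.ofReal ((n.choose a : ℝ) * (m.choose b : ℝ) *
        Real.exp (-2 * a * b * (δ - p) ^ 2)) :=
  dense_tile_existence_bound_general m n p hp0 hp1 μ hμ δ hδp a b
end

section
/- Let D, M ∈ {0,1}^{m×n} be binary matrices and x ∈ {0,1}^n, y ∈ {0,1}^m binary vectors. Let A be the binary matrix with A_{ji} = M_{ji} ∨ (y_j x_i). Then |D − A| = |D − M| − yᵀ(D ∘ M̄)x + yᵀ(D̄ ∘ M̄)x, where M̄ = 1 − M and D̄ = 1 − D denote complements and ∘ the Hadamard product. -/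
/-! The identity holds entry by entry: `a + t * (1 - a)` is the Boolean `a ∨ t`, which differs
from `a` only where `a = 0` and `t = 1`; there the error `|d - ·|` drops by one if `d = 1` and
rises by one if `d = 0`. Summing over entries with `t = y j * x i` gives the two bilinear forms. -/

open Matrix

lemma mul_eq_zero_or_one_of_eq_zero_or_one {R : Type*} [MulZeroOneClass R] {s t : R}
    (hs : s = 0 ∨ s = 1) (ht : t = 0 ∨ t = 1) : s * t = 0 ∨ s * t = 1 := by
  rcases hs with rfl | rfl <;> simp [ht]

lemma abs_sub_sup_of_eq_zero_or_one {R : Type*} [Ring R] [LinearOrder R] [IsOrderedRing R]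
    {d a t : R} (hd : d = 0 ∨ d = 1) (ha : a = 0 ∨ a = 1) (ht : t = 0 ∨ t = 1) :
    |d - (a + t * (1 - a))| = |d - a| - t * (d * (1 - a)) + t * ((1 - d) * (1 - a)) := by
  rcases hd with rfl | rfl <;> rcases ha with rfl | rfl <;> rcases ht with rfl | rfl <;> norm_num

/-- Adding the tile `(x, y)` on top of the Boolean matrix `M` changes the
approximation error by `- yᵀ(D ∘ M̄)x + yᵀ(D̄ ∘ M̄)x`. -/
theorem approx_error_add_tile (m n : ℕ)
    (D M : Matrix (Fin m) (Fin n) ℝ)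
    (hD : ∀ j i, D j i = 0 ∨ D j i = 1) (hM : ∀ j i, M j i = 0 ∨ M j i = 1)
    (x : Fin n → ℝ) (y : Fin m → ℝ)
    (hx : ∀ i, x i = 0 ∨ x i = 1) (hy : ∀ j, y j = 0 ∨ y j = 1)
    (A : Matrix (Fin m) (Fin n) ℝ)
    (hA : ∀ j i, A j i = M j i + y j * x i * (1 - M j i)) :
    ∑ j, ∑ i, |D j i - A j i| =
      (∑ j, ∑ i, |D j i - M j i|)
        - y ⬝ᵥ Matrix.mulVec (Matrix.of fun j i => D j i * (1 - M j i)) x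
        + y ⬝ᵥ Matrix.mulVec (Matrix.of fun j i => (1 - D j i) * (1 - M j i)) x := by
  have entry : ∀ j i, |D j i - A j i| = |D j i - M j i| - y j * (D j i * (1 - M j i) * x i)
      + y j * ((1 - D j i) * (1 - M j i) * x i) := fun j i => by
    have := abs_sub_sup_of_eq_zero_or_one (hD j i) (hM j i)
      (mul_eq_zero_or_one_of_eq_zero_or_one (hy j) (hx i))
    rw [hA]
    linear_combination this
  simp only [dotProduct, mulVec, of_apply, Finset.mul_sum, ← Finset.sum_sub_distrib,
    ← Finset.sum_add_distrib]
  exact Finset.sum_congr rfl fun j _ => Finset.sum_congr rfl fun i _ => entry j i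
end

section
/- Let D ∈ {0,1}^{m×n}, and let X ∈ {0,1}^{n×r}, Y ∈ {0,1}^{m×r} minimize L(X,Y) = |D − Y⊙Xᵀ| over all binary factor matrices of rank r, where (Y⊙Xᵀ)_{ji} = ⋁_{s=1}^r Y_{js}X_{is}. Fix s̃ ∈ {1,…,r}, let (x,y) = (X_{·s̃}, Y_{·s̃}) and let M be the Boolean product of all tiles except s̃, M_{ji} = ⋁_{s≠s̃} Y_{js}X_{is}. If yᵀM̄x > 0, then yᵀ(D ∘ M̄)x / (yᵀM̄x) ≥ 1/2. -/
/-!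
Deleting tile `s` (zeroing column `s` of `Y`) changes the error only on the cells of the tile
that no other tile covers: there, a one of `D` becomes a new error and a zero of `D` stops being
one. Hence, with `area` such cells of which `covered` carry a one,
`error without tile s + area = error + 2 * covered`, and optimality gives `area ≤ 2 * covered`.
-/

open Finset

/-- The Boolean matrix product of `Y` and `Xᵀ`. -/
def boolProd {m n r : ℕ} (Y : Matrix (Fin m) (Fin r) Bool)
    (X : Matrix (Fin n) (Fin r) Bool) : Matrix (Fin m) (Fin n) Bool :=
  fun j i => decide (∃ s, Y j s = true ∧ X i s = true)

/-- The approximation error `|D - Y ⊙ Xᵀ|`. -/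
def bmfError {m n r : ℕ} (D : Matrix (Fin m) (Fin n) Bool)
    (X : Matrix (Fin n) (Fin r) Bool) (Y : Matrix (Fin m) (Fin r) Bool) : ℕ :=
  ((Finset.univ : Finset (Fin m × Fin n)).filter
    fun ji => D ji.1 ji.2 ≠ boolProd Y X ji.1 ji.2).card

theorem card_ne_add_card_uncovered {ι : Type*} [Fintype ι] (d a : ι → Bool) (t : ι → Prop)
    [DecidablePred t] :
    #{i | d i ≠ a i} + #{i | t i ∧ a i = false} =
      #{i | d i ≠ (a i || decide (t i))} + 2 * #{i | t i ∧ a i = false ∧ d i = true} := by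
  simp only [card_filter, mul_sum, ← sum_add_distrib]
  refine sum_congr rfl fun i _ => ?_
  by_cases h : t i <;> cases d i <;> cases a i <;> simp [h]

section
variable {m n r : ℕ} (D : Matrix (Fin m) (Fin n) Bool) (X : Matrix (Fin n) (Fin r) Bool)
  (Y : Matrix (Fin m) (Fin r) Bool) (s : Fin r)

theorem boolProd_updateCol_false (j : Fin m) (i : Fin n) :
    boolProd (Y.updateCol s fun _ => false) X j i =
      decide (∃ t, t ≠ s ∧ Y j t = true ∧ X i t = true) := by
  simp only [boolProd, Matrix.updateCol_apply, decide_eq_decide]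
  refine exists_congr fun t => ?_
  by_cases h : t = s <;> simp [h]

theorem boolProd_eq_updateCol_or (j : Fin m) (i : Fin n) :
    boolProd Y X j i =
      (boolProd (Y.updateCol s fun _ => false) X j i ||
        decide (Y j s = true ∧ X i s = true)) := by
  rw [boolProd_updateCol_false, Bool.eq_iff_iff]
  simp only [boolProd, Bool.or_eq_true, decide_eq_true_eq]
  refine ⟨fun ⟨t, hY, hX⟩ => ?_, ?_⟩
  · by_cases h : t = s
    · subst h; exact Or.inr ⟨hY, hX⟩
    · exact Or.inl ⟨t, h, hY, hX⟩
  · rintro (⟨t, -, hY, hX⟩ | ⟨hY, hX⟩)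
    exacts [⟨t, hY, hX⟩, ⟨s, hY, hX⟩]

theorem bmfError_updateCol_false_add_card_uncovered :
    bmfError D X (Y.updateCol s fun _ => false) +
        #{ji : Fin m × Fin n | Y ji.1 s = true ∧ X ji.2 s = true ∧
          boolProd (Y.updateCol s fun _ => false) X ji.1 ji.2 = false} =
      bmfError D X Y + 2 * #{ji : Fin m × Fin n | Y ji.1 s = true ∧ X ji.2 s = true ∧
          boolProd (Y.updateCol s fun _ => false) X ji.1 ji.2 = false ∧ D ji.1 ji.2 = true} := by
  simp only [bmfError, boolProd_eq_updateCol_or X Y s]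
  simpa only [and_assoc] using
    card_ne_add_card_uncovered (fun ji : Fin m × Fin n => D ji.1 ji.2)
    (fun ji => boolProd (Y.updateCol s fun _ => false) X ji.1 ji.2)
    (fun ji => Y ji.1 s = true ∧ X ji.2 s = true)

theorem card_uncovered_le_two_mul_card_ones_of_le_bmfError_updateCol
    (h : bmfError D X Y ≤ bmfError D X (Y.updateCol s fun _ => false)) :
    #{ji : Fin m × Fin n | Y ji.1 s = true ∧ X ji.2 s = true ∧
        boolProd (Y.updateCol s fun _ => false) X ji.1 ji.2 = false} ≤
      2 * #{ji : Fin m × Fin n | Y ji.1 s = true ∧ X ji.2 s = true ∧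
        boolProd (Y.updateCol s fun _ => false) X ji.1 ji.2 = false ∧ D ji.1 ji.2 = true} := by
  have := bmfError_updateCol_false_add_card_uncovered D X Y s
  omega
end

/-- For an optimal BMF, each tile is at least half dense in the data on the
area not covered by the other tiles. -/
theorem optimal_tile_half_dense_uncovered (m n r : ℕ)
    (D : Matrix (Fin m) (Fin n) Bool)
    (X : Matrix (Fin n) (Fin r) Bool) (Y : Matrix (Fin m) (Fin r) Bool)
    (hopt : ∀ (X' : Matrix (Fin n) (Fin r) Bool) (Y' : Matrix (Fin m) (Fin r) Bool),
      bmfError D X Y ≤ bmfError D X' Y')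
    (st : Fin r)
    (M : Matrix (Fin m) (Fin n) Bool)
    (hM : ∀ j i, M j i = decide (∃ s, s ≠ st ∧ Y j s = true ∧ X i s = true))
    (area : ℕ)
    (harea : area = ((Finset.univ : Finset (Fin m × Fin n)).filter
      fun ji => Y ji.1 st = true ∧ X ji.2 st = true ∧ M ji.1 ji.2 = false).card)
    (covered : ℕ)
    (hcovered : covered = ((Finset.univ : Finset (Fin m × Fin n)).filter
      fun ji => Y ji.1 st = true ∧ X ji.2 st = true ∧ M ji.1 ji.2 = false ∧
        D ji.1 ji.2 = true).card)
    (hpos : 0 < area) :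
    (1 : ℝ) / 2 ≤ (covered : ℝ) / (area : ℝ) := by
  have hM_eq : M = boolProd (Y.updateCol st fun _ => false) X := by
    ext j i
    rw [hM, boolProd_updateCol_false]
  have harea_le : area ≤ 2 * covered := by
    subst hM_eq harea hcovered
    exact card_uncovered_le_two_mul_card_ones_of_le_bmfError_updateCol D X Y st (hopt _ _)
  rw [div_le_div_iff₀ two_pos (Nat.cast_pos.mpr hpos), one_mul, mul_comm]
  exact_mod_cast harea_le
end

section
/- Let B be an m×n random matrix with i.i.d. Bernoulli(p) entries, let n ≥ 2, μ > p², and set q = (n(n−1)/2)·exp(−(3/2)m(μ−p²)²/(2p²+μ)). If q < 1, then with probability at least 1 − q, every pair of distinct columns i ≠ k of B satisfies ⟨B_{·i}, B_{·k}⟩ < mμ; in particular the coherence of the column-normalized matrix (1/√m)B is less than μ whenever all columns are nonzero. -/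
/-!
For fixed columns `i ≠ k` the inner product is a sum over the `m` rows of independent
Bernoulli(`p²`) variables, so its moment generating function is `(1 + (eˢ - 1) p²)ᵐ`.
The Chernoff bound at Bernstein's parameter `s = 3 (μ' - p²) / (2 p² + μ')`, together with
`(3 - s) (eˢ - 1 - s) ≤ 3 s² / 2` (compare the exponential series with a geometric one), bounds
the probability that it reaches `m μ'` by `exp (-(3/2) m (μ' - p²)² / (2 p² + μ'))`.
A union bound over the `n (n - 1) / 2` pairs of columns finishes the proof.
-/

open Real MeasureTheory ProbabilityTheory
open scoped Nat

theorem Real.exp_sub_one_sub_le_of_lt_three {s : ℝ} (hs0 : 0 ≤ s) (hs3 : s < 3) :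
    exp s - 1 - s ≤ s ^ 2 / 2 * (1 - s / 3)⁻¹ := by
  have hexp : HasSum (fun n => s ^ (n + 2) / (n + 2)!) (exp s - 1 - s) := by
    have := (hasSum_nat_add_iff' 2).2 (exp_eq_exp_ℝ ▸ NormedSpace.expSeries_div_hasSum_exp s)
    simpa [Finset.sum_range_succ, sub_sub] using this
  have hgeom : HasSum (fun n : ℕ => s ^ 2 / 2 * (s / 3) ^ n) (s ^ 2 / 2 * (1 - s / 3)⁻¹) :=
    (hasSum_geometric_of_lt_one (by positivity) (by linarith)).mul_left _
  refine hasSum_le (fun n => ?_) hexp hgeom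
  have hfact : (2 * 3 ^ n : ℝ) ≤ (n + 2)! := by
    exact_mod_cast Nat.add_comm n 2 ▸ Nat.factorial_mul_pow_le_factorial (m := 2) (n := n)
  calc s ^ (n + 2) / (n + 2)! ≤ s ^ (n + 2) / (2 * 3 ^ n) := by gcongr
    _ = s ^ 2 / 2 * (s / 3) ^ n := by rw [div_pow]; ring

theorem Real.three_sub_mul_exp_sub_one_sub_le {s : ℝ} (hs : 0 ≤ s) :
    (3 - s) * (exp s - 1 - s) ≤ 3 / 2 * s ^ 2 := by
  have hquad : 0 ≤ exp s - 1 - s := by linarith [add_one_le_exp s]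
  rcases lt_or_ge s 3 with hs3 | hs3
  · calc (3 - s) * (exp s - 1 - s)
        ≤ (3 - s) * (s ^ 2 / 2 * (1 - s / 3)⁻¹) :=
          mul_le_mul_of_nonneg_left (exp_sub_one_sub_le_of_lt_three hs hs3) (by linarith)
      _ = 3 / 2 * s ^ 2 := by field_simp
  · nlinarith

lemma bernstein_exponent_le {r a : ℝ} (hr : 0 ≤ r) (hra : r < a) :
    r * (exp (3 * (a - r) / (2 * r + a)) - 1) - 3 * (a - r) / (2 * r + a) * a
      ≤ -(3 / 2) * (a - r) ^ 2 / (2 * r + a) := by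
  set d := 2 * r + a
  set s := 3 * (a - r) / d
  have hd : 0 < d := by linarith
  have h3s : 3 - s = 9 * r / d := by
    rw [eq_div_iff hd.ne', sub_mul, div_mul_cancel₀ _ hd.ne']
    ring
  have hkey := three_sub_mul_exp_sub_one_sub_le (s := s) (div_nonneg (by linarith) hd.le)
  rw [h3s] at hkey
  have hrs : r * (exp s - 1 - s) ≤ d / 6 * s ^ 2 :=
    calc r * (exp s - 1 - s) = d / 9 * (9 * r / d * (exp s - 1 - s)) := by field_simp
      _ ≤ d / 9 * (3 / 2 * s ^ 2) := by gcongr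
      _ = d / 6 * s ^ 2 := by ring
  calc r * (exp s - 1) - s * a = r * (exp s - 1 - s) - s * (a - r) := by ring
    _ ≤ d / 6 * s ^ 2 - s * (a - r) := by linarith
    _ = -(3 / 2) * (a - r) ^ 2 / d := by simp only [s]; field_simp; ring

theorem measureReal_ge_le_of_mgf_eq_binomial {Ω : Type*} [MeasurableSpace Ω] {ν : Measure Ω}
    [IsProbabilityMeasure ν] {X : Ω → ℝ} {m : ℕ} {r a : ℝ} (hr : 0 ≤ r) (hra : r < a)
    (hX : ∀ s, 0 ≤ s → mgf X ν s = (1 + (exp s - 1) * r) ^ m) :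
    ν.real {ω | m * a ≤ X ω} ≤ exp (-(3 / 2) * m * (a - r) ^ 2 / (2 * r + a)) := by
  set s := 3 * (a - r) / (2 * r + a)
  have hs : 0 ≤ s := div_nonneg (by linarith) (by linarith)
  have hbase : 1 ≤ 1 + (exp s - 1) * r := by nlinarith [one_le_exp hs]
  have hint : Integrable (fun ω => exp (s * X ω)) ν := by
    rw [← mgf_pos_iff, hX s hs]
    positivity
  calc ν.real {ω | m * a ≤ X ω} ≤ exp (-s * (m * a)) * mgf X ν s :=
        measure_ge_le_exp_mul_mgf _ hs hint
    _ ≤ exp (-s * (m * a)) * exp (m * ((exp s - 1) * r)) := by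
        rw [hX s hs, exp_nat_mul]
        gcongr
        linarith [add_one_le_exp ((exp s - 1) * r)]
    _ = exp (m * (r * (exp s - 1) - s * a)) := by rw [← exp_add]; ring_nf
    _ ≤ exp (m * (-(3 / 2) * (a - r) ^ 2 / (2 * r + a))) := by
        gcongr
        exact bernstein_exponent_le hr hra
    _ = exp (-(3 / 2) * m * (a - r) ^ 2 / (2 * r + a)) := by ring_nf

section ColumnInnerProduct

variable {ι κ : Type*} [Fintype ι] [Fintype κ]

lemma integral_ite_one_zero_bool (ν : Measure Bool) [IsFiniteMeasure ν] :
    ∫ b, (if b then (1 : ℝ) else 0) ∂ν = ν.real {true} := by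
  simp [integral_fintype .of_finite]

lemma integral_ite_mul_ite_pi [DecidableEq κ] (ν : Measure Bool) [IsProbabilityMeasure ν]
    {i k : κ} (hik : i ≠ k) :
    ∫ x : κ → Bool, (if x i then (1 : ℝ) else 0) * (if x k then 1 else 0)
        ∂(Measure.pi fun _ => ν) = ν.real {true} ^ 2 := by
  let f : κ → Bool → ℝ := fun l b => if l ∈ ({i, k} : Finset κ) then (if b then 1 else 0) else 1
  have hprod (x : κ → Bool) :
      (if x i then (1 : ℝ) else 0) * (if x k then 1 else 0) = ∏ l, f l (x l) := by
    rw [Finset.prod_ite_mem, Finset.univ_inter, Finset.prod_pair hik]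
  have hfactor (l : κ) :
      ∫ b, f l b ∂ν = if l ∈ ({i, k} : Finset κ) then ν.real {true} else 1 := by
    by_cases hl : l ∈ ({i, k} : Finset κ) <;>
      simp only [f, hl, if_true, if_false, integral_ite_one_zero_bool, integral_const,
        probReal_univ, smul_eq_mul, mul_one]
  simp_rw [hprod, integral_fintype_prod_eq_prod f, hfactor]
  rw [Finset.prod_ite_mem, Finset.univ_inter, Finset.prod_pair hik, sq]

lemma MeasureTheory.Measure.pi_map_curry (ν : Measure Bool) [IsProbabilityMeasure ν] :
    (Measure.pi fun _ : ι × κ => ν).map (MeasurableEquiv.curry ι κ Bool)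
      = Measure.pi fun _ : ι => Measure.pi fun _ : κ => ν := by
  simpa only [Measure.infinitePi_eq_pi] using
    Measure.infinitePi_map_curry (fun (_ : ι) (_ : κ) => ν)

lemma exp_mul_ite_mul_ite (s : ℝ) (a b : Bool) :
    exp (s * ((if a then 1 else 0) * (if b then 1 else 0)))
      = 1 + (exp s - 1) * ((if a then 1 else 0) * (if b then 1 else 0)) := by
  cases a <;> cases b <;> simp

theorem mgf_sum_ite_mul_ite [DecidableEq κ] (ν : Measure Bool) [IsProbabilityMeasure ν]
    {i k : κ} (hik : i ≠ k) (s : ℝ) :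
    mgf (fun ω : ι × κ → Bool =>
        ∑ j, (if ω (j, i) then (1 : ℝ) else 0) * (if ω (j, k) then 1 else 0))
      (Measure.pi fun _ => ν) s = (1 + (exp s - 1) * ν.real {true} ^ 2) ^ Fintype.card ι := by
  let g : (κ → Bool) → ℝ := fun x =>
    1 + (exp s - 1) * ((if x i then 1 else 0) * (if x k then 1 else 0))
  have hrows (ω : ι × κ → Bool) : exp (s * ∑ j, (if ω (j, i) then (1 : ℝ) else 0) *
      (if ω (j, k) then 1 else 0)) = ∏ j, g (MeasurableEquiv.curry ι κ Bool ω j) := by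
    simp only [Finset.mul_sum, exp_sum, exp_mul_ite_mul_ite, g]
    rfl
  have hg : ∫ x, g x ∂(Measure.pi fun _ => ν) = 1 + (exp s - 1) * ν.real {true} ^ 2 := by
    rw [integral_add (integrable_const _) .of_finite, integral_const, integral_const_mul,
      integral_ite_mul_ite_pi ν hik]
    simp
  simp_rw [mgf, hrows]
  rw [← integral_map_equiv (MeasurableEquiv.curry ι κ Bool)
      (fun x : ι → κ → Bool => ∏ j, g (x j)),
    Measure.pi_map_curry, integral_fintype_prod_eq_pow g, hg]

end ColumnInnerProduct

lemma measureReal_iUnion_ne_le {Ω α : Type*} [MeasurableSpace Ω] [Fintype α] [LinearOrder α]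
    (μ : Measure Ω) [IsFiniteMeasure μ] {A : α → α → Set Ω} (hA : ∀ i k, A i k = A k i)
    {c : ℝ} (hc : ∀ i k, i < k → μ.real (A i k) ≤ c) :
    μ.real (⋃ i, ⋃ k, ⋃ (_ : i ≠ k), A i k) ≤ (Fintype.card α).choose 2 * c := by
  have hsub : ⋃ i, ⋃ k, ⋃ (_ : i ≠ k), A i k
      ⊆ ⋃ x ∈ ({x : α × α | x.1 < x.2} : Finset (α × α)), A x.1 x.2 := by
    simp only [Set.iUnion_subset_iff]
    intro i k hik
    rcases hik.lt_or_gt with h | h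
    · exact Finset.subset_set_biUnion_of_mem (f := fun x : α × α => A x.1 x.2) (x := (i, k))
        (by simpa using h)
    · rw [hA]
      exact Finset.subset_set_biUnion_of_mem (f := fun x : α × α => A x.1 x.2) (x := (k, i))
        (by simpa using h)
  calc μ.real (⋃ i, ⋃ k, ⋃ (_ : i ≠ k), A i k)
      ≤ ∑ x ∈ ({x : α × α | x.1 < x.2} : Finset (α × α)), μ.real (A x.1 x.2) :=
        (measureReal_mono hsub (measure_ne_top _ _)).trans (measureReal_biUnion_finset_le _ _)
    _ ≤ ∑ _x ∈ ({x : α × α | x.1 < x.2} : Finset (α × α)), c :=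
        Finset.sum_le_sum fun x hx => hc _ _ (by simpa using hx)
    _ = (Fintype.card α).choose 2 * c := by
        rw [Finset.sum_const, Fintype.card_product_filter_lt, nsmul_eq_mul]

lemma PMF.bernoulli_toMeasure_real_true (p : NNReal) (h : p ≤ 1) :
    (PMF.bernoulli p h).toMeasure.real {true} = p := by
  rw [measureReal_def, PMF.toMeasure_apply_singleton _ _ (measurableSet_singleton _),
    PMF.bernoulli_apply]
  simp

theorem coherence_bound_complement_general (m n : ℕ) (p : ℝ)
    (hp0 : 0 ≤ p) (hp1 : p ≤ 1)
    (μ : Measure ((Fin m × Fin n) → Bool))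
    (hμ : μ = Measure.pi fun _ =>
      (PMF.bernoulli (Real.toNNReal p) (Real.toNNReal_le_one.mpr hp1)).toMeasure)
    (μ' : ℝ) (hμ' : p ^ 2 < μ') (q : ℝ)
    (hq : q = (n * (n - 1) / 2 : ℝ) *
      Real.exp (-(3 / 2) * m * (μ' - p ^ 2) ^ 2 / (2 * p ^ 2 + μ'))) :
    ENNReal.ofReal (1 - q) ≤
      μ {ω | ∀ i k : Fin n, i ≠ k →
        (∑ j, (if ω (j, i) then (1 : ℝ) else 0) * (if ω (j, k) then 1 else 0))
          < (m : ℝ) * μ'} := by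
  subst hμ
  set ν := (PMF.bernoulli (Real.toNNReal p) (Real.toNNReal_le_one.mpr hp1)).toMeasure
  have hν : ν.real {true} = p := by
    rw [PMF.bernoulli_toMeasure_real_true, Real.coe_toNNReal _ hp0]
  let bad (i k : Fin n) : Set ((Fin m × Fin n) → Bool) :=
    {ω | m * μ' ≤ ∑ j, (if ω (j, i) then (1 : ℝ) else 0) * (if ω (j, k) then 1 else 0)}
  have hbad_symm (i k : Fin n) : bad i k = bad k i := by simp only [bad, mul_comm]
  have htail (i k : Fin n) (hik : i < k) :
      (Measure.pi fun _ => ν).real (bad i k)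
        ≤ exp (-(3 / 2) * m * (μ' - p ^ 2) ^ 2 / (2 * p ^ 2 + μ')) := by
    refine measureReal_ge_le_of_mgf_eq_binomial (sq_nonneg p) hμ' fun s _ => ?_
    rw [mgf_sum_ite_mul_ite ν hik.ne s, hν, Fintype.card_fin]
  have hunion : (Measure.pi fun _ => ν).real (⋃ i, ⋃ k, ⋃ (_ : i ≠ k), bad i k) ≤ q := by
    rw [hq, ← Nat.cast_choose_two]
    simpa using measureReal_iUnion_ne_le _ hbad_symm htail
  have hgood : {ω | ∀ i k : Fin n, i ≠ k →
      (∑ j, (if ω (j, i) then (1 : ℝ) else 0) * (if ω (j, k) then 1 else 0)) < (m : ℝ) * μ'}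
      = (⋃ i, ⋃ k, ⋃ (_ : i ≠ k), bad i k)ᶜ := by
    ext ω
    simp [bad]
  rw [hgood, ENNReal.ofReal_le_iff_le_toReal (measure_ne_top _ _), ← measureReal_def,
    probReal_compl_eq_one_sub .of_discrete]
  linarith

/-- Complement form of the coherence bound: with probability at least `1 - q`,
every pair of distinct columns of the Bernoulli matrix has inner product less
than `m μ'`. -/
theorem coherence_bound_complement (m n : ℕ) (hn : 2 ≤ n) (p : ℝ)
    (hp0 : 0 ≤ p) (hp1 : p ≤ 1)
    (μ : Measure ((Fin m × Fin n) → Bool))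
    (hμ : μ = Measure.pi fun _ =>
      (PMF.bernoulli (Real.toNNReal p) (Real.toNNReal_le_one.mpr hp1)).toMeasure)
    (μ' : ℝ) (hμ' : p ^ 2 < μ') (q : ℝ)
    (hq : q = (n * (n - 1) / 2 : ℝ) *
      Real.exp (-(3 / 2) * m * (μ' - p ^ 2) ^ 2 / (2 * p ^ 2 + μ')))
    (hq1 : q < 1) :
    ENNReal.ofReal (1 - q) ≤
      μ {ω | ∀ i k : Fin n, i ≠ k →
        (∑ j, (if ω (j, i) then (1 : ℝ) else 0) * (if ω (j, k) then 1 else 0))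
          < (m : ℝ) * μ'} :=
  coherence_bound_complement_general m n p hp0 hp1 μ hμ μ' hμ' q hq
end
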